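/- Consider a uniform instance with r = W mod Max, 0 < r, and k = ⌈W/Max⌉. Let x be a feasible allocation of maximum profit such that x i ∈ {0, r, Max} for all i and such that every point t : ℝ is contained in at most k of the intervals [s i, e i) with x i > 0. Then, writing λ = r/Max and G1 = {i | x i = r}, it holds that r · |G1| ≤ (λ/(k − 1 + λ)) · (∑ i, x i). -/

import Mathlib

open Finset

/-- A feasible allocation (FBAP solution). -/
def IsAlloc {n : ℕ} (W : ℕ) (s e : Fin n → ℝ) (rmax : Fin n → ℕ)
    (x : Fin n → ℕ) : Prop :=
  (∀ i, x i ≤ rmax i) ∧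
  ∀ t : ℝ, ∑ i ∈ Finset.univ.filter (fun i => s i ≤ t ∧ t < e i), x i ≤ W

/-- Profit of an allocation. -/
def allocProfit {n : ℕ} (p : Fin n → ℝ) (x : Fin n → ℕ) : ℝ :=
  ∑ i, p i * x i

/-!
Write `W = K * Max + r`. Ranking the endpoints turns the jobs into integer intervals
`[σ i, ε i)`. On the time points consider the residual graph with arcs `σ i → ε i` of weight
`-1` (job `i` may grow), `ε i → σ i` of weight `1` (job `i` may shrink), `q → q + 1` of weight `0`,
and `q + 1 → q` of weight `0` when the load at `q` is below `W`. Pushing one unit around a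
negative simple cycle would give a feasible allocation of larger profit, so by optimality there
is none, and shortest-path distances give a potential `π`. It is non-increasing in time, drops
only at fully loaded points, drops by exactly `1` across a job with `x i = r` and by at most `1`
across a job with `x i = Max`. A fully loaded point carries `K * Max + r` with at most `K + 1`
jobs, hence exactly one job of size `r` and `K` of size `Max`. Summing the drops of `π` over the
jobs of each kind gives `K * |G₁| ≤ |G₂|`, and `∑ i, x i = r * |G₁| + Max * |G₂|` turns this into
the claim.
-/

section ShortestPathPotential

variable {α : Type*} (w : α → α → ℝ)

def walkCost : List α → ℝ
  | a :: b :: l => w a b + walkCost (b :: l)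
  | _ => 0

theorem walkCost_append_cons (l₁ : List α) (c : α) (l₂ : List α) :
    walkCost w (l₁ ++ c :: l₂) = walkCost w (l₁ ++ [c]) + walkCost w (c :: l₂) := by
  induction l₁ with
  | nil => simp [walkCost]
  | cons a l₁ ih =>
    cases l₁ with
    | nil => simp [walkCost]
    | cons b l₁ =>
      simp only [List.cons_append, walkCost] at ih ⊢
      rw [ih, add_assoc]

theorem walkCost_eq_sum_getD (d : α) :
    ∀ l : List α,
      walkCost w l = ∑ j ∈ range (l.length - 1), w (l.getD j d) (l.getD (j + 1) d)
  | [] | [_] => by simp [walkCost]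
  | a :: b :: l => by
    rw [walkCost, walkCost_eq_sum_getD d (b :: l)]
    simp [Finset.sum_range_succ', add_comm]

theorem List.exists_cycle_of_not_nodup {l : List α} (h : ¬ l.Nodup) :
    ∃ c A B C, l = A ++ c :: B ++ c :: C ∧ (c :: B).Nodup := by
  induction l with
  | nil => simp at h
  | cons a t ih =>
    by_cases ht : t.Nodup
    · obtain ⟨B, C, rfl⟩ := List.append_of_mem (by simpa [ht] using h : a ∈ t)
      exact ⟨a, [], B, C, rfl,
        (List.nodup_middle.mp ht).sublist ((List.sublist_append_left B C).cons_cons a)⟩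
    · obtain ⟨c, A, B, C, rfl, hB⟩ := ih ht
      exact ⟨c, a :: A, B, C, rfl, hB⟩

theorem List.Nodup.injOn_getD_append_singleton {c : α} {B : List α} (h : (c :: B).Nodup) :
    Set.InjOn (fun j => (c :: B ++ [c]).getD j c) (Set.Iio (B.length + 1)) := by
  intro j₁ h₁ j₂ h₂ hj
  have h₁' : j₁ < (c :: B).length := h₁
  have h₂' : j₂ < (c :: B).length := h₂
  simp only [List.getD_append _ _ _ _ h₁', List.getD_append _ _ _ _ h₂',
    List.getD_eq_getElem _ _ h₁', List.getD_eq_getElem _ _ h₂'] at hj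
  exact h.getElem_inj_iff.mp hj

def HasNonnegSimpleCycles (S : Finset α) : Prop :=
  ∀ c B, (c :: B).Nodup → (∀ u ∈ c :: B, u ∈ S) → 0 ≤ walkCost w (c :: B ++ [c])

variable {w}

theorem exists_nodup_walkCost_le {S : Finset α} (hS : HasNonnegSimpleCycles w S)
    (l : List α) (hl : ∀ u ∈ l, u ∈ S) :
    ∃ l', l'.Nodup ∧ (∀ u ∈ l', u ∈ S) ∧ l'.getLast? = l.getLast? ∧
      walkCost w l' ≤ walkCost w l := by
  by_cases hnd : l.Nodup
  · exact ⟨l, hnd, hl, rfl, le_rfl⟩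
  obtain ⟨c, A, B, C, rfl, hB⟩ := List.exists_cycle_of_not_nodup hnd
  have hcycle := hS c B hB fun u hu => hl u (by simp at hu ⊢; tauto)
  obtain ⟨l', hnd', hS', hlast, hcost⟩ :=
    exists_nodup_walkCost_le hS (A ++ c :: C) fun u hu => hl u (by simp at hu ⊢; tauto)
  refine ⟨l', hnd', hS', ?_, hcost.trans ?_⟩
  · simp only [hlast, List.getLast?_append, List.append_assoc, List.cons_append]
    simp [List.getLast?_cons]
  have hsplit : walkCost w (A ++ c :: B ++ c :: C) =
      walkCost w (A ++ [c]) + walkCost w (c :: B ++ [c]) + walkCost w (c :: C) := by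
    rw [List.append_assoc, List.cons_append, walkCost_append_cons w A c,
      ← @List.cons_append _ c B (c :: C), walkCost_append_cons w (c :: B) c C, add_assoc]
  rw [hsplit, walkCost_append_cons w A c C]
  linarith
termination_by l.length
decreasing_by subst_vars; simp

theorem exists_potential_of_hasNonnegSimpleCycles {S : Finset α}
    (hS : HasNonnegSimpleCycles w S) :
    ∃ π : α → ℝ, ∀ u ∈ S, ∀ v ∈ S, π v ≤ π u + w u v := by
  classical
  set T : Finset (List α) := S.powerset.biUnion fun A => A.val.lists.toFinset
  have mem_T : ∀ l : List α, l.Nodup → (∀ u ∈ l, u ∈ S) → l ∈ T := fun l hnd hl => by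
    simp only [T, mem_biUnion, mem_powerset, Multiset.mem_toFinset, Multiset.mem_lists_iff]
    exact ⟨l.toFinset, fun u hu => hl u (List.mem_toFinset.mp hu),
      by simp [List.toFinset_val, hnd.dedup]⟩
  have subset_S : ∀ l ∈ T, ∀ u ∈ l, u ∈ S := fun l hl u hu => by
    simp only [T, mem_biUnion, mem_powerset, Multiset.mem_toFinset, Multiset.mem_lists_iff] at hl
    obtain ⟨A, hAS, hA⟩ := hl
    exact hAS (by rw [← Finset.mem_val, hA]; exact hu)
  have hT : T.Nonempty := ⟨[], mem_T [] List.nodup_nil (by simp)⟩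
  refine ⟨fun v => T.inf' hT fun l => walkCost w (l ++ [v]), fun u hu v hv => ?_⟩
  obtain ⟨l, hlT, hl⟩ := T.exists_mem_eq_inf' hT fun l => walkCost w (l ++ [u])
  obtain ⟨l', hnd, hl'S, hlast, hcost⟩ := exists_nodup_walkCost_le hS (l ++ [u, v])
    fun z hz => by
      simp only [List.mem_append, List.mem_cons] at hz
      rcases hz with hz | rfl | rfl | hz
      exacts [subset_S l hlT z hz, hu, hv, absurd hz List.not_mem_nil]
  obtain ⟨l'', rfl⟩ := List.getLast?_eq_some_iff.mp (by simpa using hlast)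
  calc T.inf' hT (fun l => walkCost w (l ++ [v])) ≤ walkCost w (l'' ++ [v]) :=
        T.inf'_le _ (mem_T _ (hnd.sublist (List.sublist_append_left _ _))
          fun z hz => hl'S z (List.mem_append_left _ hz))
    _ ≤ walkCost w (l ++ u :: [v]) := hcost
    _ = _ := by rw [walkCost_append_cons w l u [v], ← hl]; simp [walkCost]

end ShortestPathPotential

theorem sum_range_ite_eq_le_one {f : ℕ → ℕ} {L : ℕ} (hf : Set.InjOn f (Set.Iio L)) (a : ℕ) :
    ∑ j ∈ range L, (if f j = a then 1 else 0 : ℤ) ≤ 1 := by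
  rw [sum_boole, Nat.cast_le_one, card_le_one]
  intro j₁ h₁ j₂ h₂
  simp only [mem_filter, mem_range] at h₁ h₂
  exact hf h₁.1 h₂.1 (h₁.2.trans h₂.2.symm)

theorem sum_comp_eq_of_forall_eq_zero_or {ι R : Type*} [AddCommMonoid R] (A : Finset ι)
    {x : ι → ℕ} {r Max : ℕ} (hrMax : r ≠ Max) (hvals : ∀ i, x i = 0 ∨ x i = r ∨ x i = Max)
    {g : ℕ → R} (hg : g 0 = 0) :
    ∑ i ∈ A, g (x i) = #{i ∈ A | x i = r} • g r + #{i ∈ A | x i = Max} • g Max := by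
  have hsplit (i : ι) :
      g (x i) = (if x i = r then g r else 0) + if x i = Max then g Max else 0 := by
    rcases hvals i with h | h | h <;> simp only [h] <;> split_ifs <;> simp_all
  rw [sum_congr rfl fun i _ => hsplit i, sum_add_distrib, ← sum_filter, ← sum_filter, sum_const,
    sum_const]

theorem sum_sum_Ico_eq_sum_card_mul {ι : Type*} (G : Finset ι) {σ ε : ι → ℕ} {M : ℕ}
    (hM : ∀ i, ε i ≤ M) (d : ℕ → ℝ) :
    ∑ i ∈ G, ∑ q ∈ Ico (σ i) (ε i), d q =
      ∑ q ∈ range M, (#{i ∈ G | σ i ≤ q ∧ q < ε i} : ℝ) * d q := by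
  have hIco (i : ι) : ∑ q ∈ Ico (σ i) (ε i), d q =
      ∑ q ∈ range M, if σ i ≤ q ∧ q < ε i then d q else 0 := by
    rw [← sum_filter]
    congr 1
    ext q
    simp only [mem_Ico, mem_filter, mem_range]
    have := hM i
    omega
  simp_rw [hIco]
  rw [sum_comm]
  refine sum_congr rfl fun q _ => ?_
  rw [sum_ite, sum_const_zero, add_zero, sum_const, nsmul_eq_mul]

theorem eq_one_and_eq_of_mul_add_mul_eq {r Max K a b : ℕ} (hr : 0 < r) (hrMax : r < Max)
    (hsum : r * a + Max * b = K * Max + r) (hcard : a + b ≤ K + 1) : a = 1 ∧ b = K := by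
  have hbK : b ≤ K := by nlinarith
  have hb : b = K := by nlinarith
  subst hb
  exact ⟨by nlinarith, rfl⟩

theorem ceil_natCast_div_eq_div_add_one {W Max : ℕ} (hMax : 0 < Max) (hr : 0 < W % Max) :
    ⌈(W : ℝ) / Max⌉₊ = W / Max + 1 := by
  have hdiv := Nat.div_add_mod' W Max
  have hlt := Nat.mod_lt W hMax
  set K := W / Max
  rw [Nat.ceil_eq_iff (Nat.add_one_ne_zero K), Nat.add_sub_cancel, lt_div_iff₀ (by positivity),
    div_le_iff₀ (by positivity)]
  constructor
  · exact_mod_cast (by linarith : K * Max < W)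
  · exact_mod_cast (by linarith : W ≤ (K + 1) * Max)

theorem mul_le_div_div_mul {r Max K g₁ g₂ : ℝ} (hr : 0 < r) (hMax : 0 < Max) (hK : 0 ≤ K)
    (h : K * g₁ ≤ g₂) : r * g₁ ≤ r / Max / (K + r / Max) * (g₁ * r + g₂ * Max) := by
  have hD : 0 < K * Max + r := by positivity
  rw [show r / Max / (K + r / Max) = r / (K * Max + r) by field_simp, div_mul_eq_mul_div,
    le_div_iff₀ hD]
  nlinarith [mul_le_mul_of_nonneg_left h (mul_pos hr hMax).le]

section Rank

variable {α : Type*} [LinearOrder α] (P : Finset α)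

def rankIn (t : α) : ℕ := #{a ∈ P | a ≤ t}

variable {P}

theorem rankIn_le_rankIn_iff {p : α} (hp : p ∈ P) (t : α) :
    rankIn P p ≤ rankIn P t ↔ p ≤ t := by
  refine ⟨fun h => not_lt.mp fun htp => h.not_gt (card_lt_card ?_), fun h => ?_⟩
  · refine (ssubset_iff_of_subset fun a ha => ?_).mpr ⟨p, by simp [hp], by simp [htp]⟩
    simp only [mem_filter] at ha ⊢
    exact ⟨ha.1, ha.2.trans htp.le⟩
  · refine card_le_card fun a ha => ?_
    simp only [mem_filter] at ha ⊢
    exact ⟨ha.1, ha.2.trans h⟩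

theorem rankIn_le_iff_or (q : ℕ) :
    (∃ t, ∀ p ∈ P, rankIn P p ≤ q ↔ p ≤ t) ∨ ∀ p ∈ P, q < rankIn P p := by
  by_cases h : ∃ p ∈ P, rankIn P p ≤ q
  · have hne : ({p ∈ P | rankIn P p ≤ q} : Finset α).Nonempty := by
      simpa [Finset.Nonempty] using h
    set t := ({p ∈ P | rankIn P p ≤ q} : Finset α).max' hne
    have ht : t ∈ P ∧ rankIn P t ≤ q := by simpa using max'_mem _ hne
    refine Or.inl ⟨t, fun p hp => ⟨fun hpq => le_max' _ p (by simp [hp, hpq]), fun hpt => ?_⟩⟩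
    exact ((rankIn_le_rankIn_iff hp t).mpr hpt).trans ht.2
  · push Not at h
    exact Or.inr h

end Rank

namespace FBAP

section ResidualGraph

variable {n : ℕ} (σ ε : Fin n → ℕ)

def activeAt (q : ℕ) : Finset (Fin n) := {i | σ i ≤ q ∧ q < ε i}

def load (y : Fin n → ℕ) (q : ℕ) : ℕ := ∑ i ∈ activeAt σ ε q, y i

def IsDiscreteAlloc (W : ℕ) (rmax y : Fin n → ℕ) : Prop :=
  (∀ i, y i ≤ rmax i) ∧ ∀ q, load σ ε y q ≤ W

variable (W : ℕ) (rmax x : Fin n → ℕ) (M : ℕ)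

def IsIncreaseArc (u v : ℕ) : Prop := ∃ i, x i < rmax i ∧ σ i = u ∧ ε i = v

def IsDecreaseArc (u v : ℕ) : Prop := ∃ i, 0 < x i ∧ ε i = u ∧ σ i = v

def IsGroundArc (u v : ℕ) : Prop := v = u + 1 ∨ (u = v + 1 ∧ load σ ε x v < W)

def IsResidualArc (u v : ℕ) : Prop :=
  IsIncreaseArc σ ε rmax x u v ∨ IsGroundArc σ ε W x u v ∨ IsDecreaseArc σ ε x u v

/-- The change of the allocation when one unit is pushed from `u` to `v`, along the cheapest
arc: an increase (weight `-1`) before a ground arc (`0`) before a decrease (`1`). -/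
noncomputable def residualEffect (u v : ℕ) : Fin n → ℤ :=
  open Classical in
  if h : IsIncreaseArc σ ε rmax x u v then Pi.single h.choose 1
  else if IsGroundArc σ ε W x u v then 0
  else if h : IsDecreaseArc σ ε x u v then Pi.single h.choose (-1)
  else 0

/-- Pairs joined by no arc get weight `M + 1`: a simple cycle on `{0, …, M}` has at most
`M + 1` arcs, each of weight `≥ -1`, so it cannot turn negative through such a pair. -/
noncomputable def residualWeight (u v : ℕ) : ℝ :=
  open Classical in
  if IsResidualArc σ ε W rmax x u v then -((∑ i, residualEffect σ ε W rmax x u v i : ℤ) : ℝ)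
  else M + 1

theorem residualEffect_cases (u v : ℕ) :
    (∃ j, x j < rmax j ∧ σ j = u ∧ ε j = v ∧
      residualEffect σ ε W rmax x u v = Pi.single j 1) ∨
    (∃ j, 0 < x j ∧ ε j = u ∧ σ j = v ∧
      residualEffect σ ε W rmax x u v = Pi.single j (-1)) ∨
    (residualEffect σ ε W rmax x u v = 0 ∧
      (IsResidualArc σ ε W rmax x u v → IsGroundArc σ ε W x u v)) := by
  unfold residualEffect
  split_ifs with hinc hg hdec
  · obtain ⟨hx, hσ, hε⟩ := hinc.choose_spec
    exact Or.inl ⟨_, hx, hσ, hε, rfl⟩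
  · exact Or.inr (Or.inr ⟨rfl, fun _ => hg⟩)
  · obtain ⟨hx, hε, hσ⟩ := hdec.choose_spec
    exact Or.inr (Or.inl ⟨_, hx, hε, hσ, rfl⟩)
  · exact Or.inr (Or.inr ⟨rfl, fun h => by unfold IsResidualArc at h; tauto⟩)

theorem residualEffect_le (u v : ℕ) (i : Fin n) :
    residualEffect σ ε W rmax x u v i ≤ if σ i = u ∧ x i < rmax i then 1 else 0 := by
  rcases residualEffect_cases σ ε W rmax x u v with
    ⟨j, hx, hσ, -, h⟩ | ⟨j, -, -, -, h⟩ | ⟨h, -⟩ <;>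
    rw [h] <;> simp only [Pi.single_apply, Pi.zero_apply] <;> split_ifs <;> simp_all

theorem neg_le_residualEffect (u v : ℕ) (i : Fin n) :
    -(if ε i = u ∧ 0 < x i then 1 else 0) ≤ residualEffect σ ε W rmax x u v i := by
  rcases residualEffect_cases σ ε W rmax x u v with
    ⟨j, -, -, -, h⟩ | ⟨j, hx, hε, -, h⟩ | ⟨h, -⟩ <;>
    rw [h] <;> simp only [Pi.single_apply, Pi.zero_apply] <;> split_ifs <;> simp_all

/-- The indicator difference telescopes along a closed walk; the only arc that adds load at `t`
beyond its crossing of `t` is the ground arc `t + 1 → t`, present only if `t` has spare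
capacity. -/
theorem sum_active_residualEffect_le (hσε : ∀ i, σ i < ε i) {u v : ℕ}
    (huv : IsResidualArc σ ε W rmax x u v) (t : ℕ) :
    ∑ i ∈ activeAt σ ε t, residualEffect σ ε W rmax x u v i ≤
      ((if t < v then 1 else 0) - if t < u then 1 else 0) +
        if u = t + 1 ∧ v = t ∧ load σ ε x t < W then 1 else 0 := by
  rcases residualEffect_cases σ ε W rmax x u v with
    ⟨j, -, rfl, rfl, h⟩ | ⟨j, -, rfl, rfl, h⟩ | ⟨h, hg⟩
  · have := hσε j
    simp only [h, sum_pi_single', activeAt, mem_filter, mem_univ, true_and]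
    split_ifs <;> omega
  · have := hσε j
    simp only [h, sum_pi_single', activeAt, mem_filter, mem_univ, true_and]
    split_ifs <;> omega
  · simp only [h, Pi.zero_apply, sum_const_zero]
    rcases hg huv with rfl | ⟨rfl, hload⟩
    · split_ifs <;> omega
    · obtain rfl | htv := eq_or_ne v t <;> split_ifs <;> omega

theorem residualWeight_of_isResidualArc {u v : ℕ} (h : IsResidualArc σ ε W rmax x u v) :
    residualWeight σ ε W rmax x M u v = -((∑ i, residualEffect σ ε W rmax x u v i : ℤ) : ℝ) :=
  if_pos h

theorem neg_one_le_residualWeight (u v : ℕ) : -1 ≤ residualWeight σ ε W rmax x M u v := by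
  unfold residualWeight
  split_ifs
  · rcases residualEffect_cases σ ε W rmax x u v with
      ⟨j, -, -, -, h⟩ | ⟨j, -, -, -, h⟩ | ⟨h, -⟩ <;> simp [h]
  · linarith [M.cast_nonneg (α := ℝ)]

theorem residualWeight_le_one {u v : ℕ} (h : IsResidualArc σ ε W rmax x u v) :
    residualWeight σ ε W rmax x M u v ≤ 1 := by
  rw [residualWeight_of_isResidualArc σ ε W rmax x M h]
  rcases residualEffect_cases σ ε W rmax x u v with
    ⟨j, -, -, -, h⟩ | ⟨j, -, -, -, h⟩ | ⟨h, -⟩ <;> simp [h]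

theorem residualWeight_of_isIncreaseArc {u v : ℕ} (h : IsIncreaseArc σ ε rmax x u v) :
    residualWeight σ ε W rmax x M u v = -1 := by
  simp [residualWeight, residualEffect, h, IsResidualArc]

theorem residualWeight_nonpos_of_isGroundArc {u v : ℕ} (h : IsGroundArc σ ε W x u v) :
    residualWeight σ ε W rmax x M u v ≤ 0 := by
  by_cases hinc : IsIncreaseArc σ ε rmax x u v
  · rw [residualWeight_of_isIncreaseArc σ ε W rmax x M hinc]; norm_num
  · simp [residualWeight, residualEffect, h, hinc, IsResidualArc]

noncomputable def cycleShift (f : ℕ → ℕ) (L : ℕ) (i : Fin n) : ℤ :=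
  ∑ j ∈ range L, residualEffect σ ε W rmax x (f j) (f (j + 1)) i

variable {f : ℕ → ℕ} {L : ℕ}

theorem cycleShift_le (hf : Set.InjOn f (Set.Iio L)) (i : Fin n) :
    cycleShift σ ε W rmax x f L i ≤ if x i < rmax i then 1 else 0 := by
  calc cycleShift σ ε W rmax x f L i
      ≤ ∑ j ∈ range L, if σ i = f j ∧ x i < rmax i then 1 else 0 :=
        sum_le_sum fun j _ => residualEffect_le σ ε W rmax x _ _ i
    _ ≤ _ := by
      split_ifs with hx
      · simpa [hx, eq_comm] using sum_range_ite_eq_le_one hf (σ i)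
      · simp [hx]

theorem neg_le_cycleShift (hf : Set.InjOn f (Set.Iio L)) (i : Fin n) :
    -(if 0 < x i then 1 else 0) ≤ cycleShift σ ε W rmax x f L i := by
  calc -(if 0 < x i then 1 else 0)
      ≤ ∑ j ∈ range L, -(if ε i = f j ∧ 0 < x i then 1 else 0) := by
        rw [sum_neg_distrib, neg_le_neg_iff]
        split_ifs with hx
        · simpa [hx, eq_comm] using sum_range_ite_eq_le_one hf (ε i)
        · simp [hx]
    _ ≤ _ := sum_le_sum fun j _ => neg_le_residualEffect σ ε W rmax x _ _ i

theorem sum_active_cycleShift_le (hσε : ∀ i, σ i < ε i) (hf : Set.InjOn f (Set.Iio L))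
    (hcycle : f L = f 0) (harc : ∀ j < L, IsResidualArc σ ε W rmax x (f j) (f (j + 1)))
    (t : ℕ) :
    ∑ i ∈ activeAt σ ε t, cycleShift σ ε W rmax x f L i ≤
      if load σ ε x t < W then 1 else 0 := by
  set χ : ℕ → ℤ := fun u => if t < u then 1 else 0
  calc ∑ i ∈ activeAt σ ε t, cycleShift σ ε W rmax x f L i
      ≤ ∑ j ∈ range L, ((χ (f (j + 1)) - χ (f j)) +
          if f j = t + 1 ∧ f (j + 1) = t ∧ load σ ε x t < W then 1 else 0) := by
        unfold cycleShift
        rw [sum_comm]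
        exact sum_le_sum fun j hj =>
          sum_active_residualEffect_le σ ε W rmax x hσε (harc j (mem_range.mp hj)) t
    _ ≤ _ := by
      rw [sum_add_distrib, sum_range_sub (fun j => χ (f j)), hcycle, sub_self, zero_add]
      split_ifs with hW
      · calc _ ≤ ∑ j ∈ range L, (if f j = t + 1 then 1 else 0 : ℤ) :=
              sum_le_sum fun j _ => by split_ifs <;> simp_all
          _ ≤ 1 := sum_range_ite_eq_le_one hf (t + 1)
      · simp [hW]

theorem sum_cycleShift (harc : ∀ j < L, IsResidualArc σ ε W rmax x (f j) (f (j + 1))) :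
    ∑ i, (cycleShift σ ε W rmax x f L i : ℝ) =
      -∑ j ∈ range L, residualWeight σ ε W rmax x M (f j) (f (j + 1)) := by
  rw [← sum_neg_distrib]
  unfold cycleShift
  push_cast
  rw [sum_comm]
  refine sum_congr rfl fun j hj => ?_
  rw [residualWeight_of_isResidualArc σ ε W rmax x M (harc j (mem_range.mp hj)), neg_neg]
  push_cast
  rfl

theorem toNat_add_cycleShift (hf : Set.InjOn f (Set.Iio L)) (i : Fin n) :
    ((x i + cycleShift σ ε W rmax x f L i).toNat : ℤ) = x i + cycleShift σ ε W rmax x f L i := by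
  have := neg_le_cycleShift σ ε W rmax x hf i
  exact Int.toNat_of_nonneg (by split_ifs at this <;> omega)

theorem isDiscreteAlloc_shift (hσε : ∀ i, σ i < ε i) (hx : IsDiscreteAlloc σ ε W rmax x)
    (hf : Set.InjOn f (Set.Iio L)) (hcycle : f L = f 0)
    (harc : ∀ j < L, IsResidualArc σ ε W rmax x (f j) (f (j + 1))) :
    IsDiscreteAlloc σ ε W rmax fun i => (x i + cycleShift σ ε W rmax x f L i).toNat := by
  refine ⟨fun i => ?_, fun t => ?_⟩
  · have h₁ := cycleShift_le σ ε W rmax x hf i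
    have h₂ := hx.1 i
    rw [Int.toNat_le]
    split_ifs at h₁ <;> omega
  · have h₁ := sum_active_cycleShift_le σ ε W rmax x hσε hf hcycle harc t
    have h₂ : (load σ ε x t : ℤ) ≤ W := by exact_mod_cast hx.2 t
    have hload : (load σ ε (fun i => (x i + cycleShift σ ε W rmax x f L i).toNat) t : ℤ) =
        load σ ε x t + ∑ i ∈ activeAt σ ε t, cycleShift σ ε W rmax x f L i := by
      unfold load
      push_cast [toNat_add_cycleShift σ ε W rmax x hf]
      exact sum_add_distrib
    have : (load σ ε (fun i => (x i + cycleShift σ ε W rmax x f L i).toNat) t : ℤ) ≤ W := by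
      split_ifs at h₁ with hW
      · have : (load σ ε x t : ℤ) < W := by exact_mod_cast hW
        omega
      · omega
    exact_mod_cast this

theorem isResidualArc_of_sum_residualWeight_neg (hL : L ≤ M + 1)
    (hneg : ∑ j ∈ range L, residualWeight σ ε W rmax x M (f j) (f (j + 1)) < 0) :
    ∀ j < L, IsResidualArc σ ε W rmax x (f j) (f (j + 1)) := by
  intro k hk
  by_contra h
  have hbig : (M + 1 : ℝ) + 1 ≤
      ∑ j ∈ range L, (residualWeight σ ε W rmax x M (f j) (f (j + 1)) + 1) := by
    rw [← show residualWeight σ ε W rmax x M (f k) (f (k + 1)) = M + 1 from if_neg h]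
    exact single_le_sum (f := fun j => residualWeight σ ε W rmax x M (f j) (f (j + 1)) + 1)
      (fun j _ => by linarith [neg_one_le_residualWeight σ ε W rmax x M (f j) (f (j + 1))])
      (mem_range.mpr hk)
  rw [sum_add_distrib, sum_const, card_range, nsmul_one] at hbig
  have : (L : ℝ) ≤ M + 1 := by exact_mod_cast hL
  linarith

theorem hasNonnegSimpleCycles_residualWeight (hσε : ∀ i, σ i < ε i)
    (hx : IsDiscreteAlloc σ ε W rmax x)
    (hopt : ∀ y, IsDiscreteAlloc σ ε W rmax y → ∑ i, y i ≤ ∑ i, x i) :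
    HasNonnegSimpleCycles (residualWeight σ ε W rmax x M) (range (M + 1)) := by
  intro c B hnd hS
  rw [walkCost_eq_sum_getD _ c]
  simp only [List.length_append, List.length_cons, List.length_nil, Nat.add_sub_cancel]
  by_contra! hneg
  set f : ℕ → ℕ := fun j => (c :: B ++ [c]).getD j c
  have hf : Set.InjOn f (Set.Iio (B.length + 1)) := hnd.injOn_getD_append_singleton
  have hcycle : f (B.length + 1) = f 0 := by simp [f]
  have hL : B.length + 1 ≤ M + 1 := by
    have := card_le_card (show (c :: B).toFinset ⊆ range (M + 1) from
      fun u hu => hS u (List.mem_toFinset.mp hu))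
    rw [List.toFinset_card_of_nodup hnd, card_range] at this
    simpa using this
  have harc := isResidualArc_of_sum_residualWeight_neg σ ε W rmax x M hL hneg
  have hgain : 0 < ∑ i, cycleShift σ ε W rmax x f (B.length + 1) i := by
    have := sum_cycleShift σ ε W rmax x M harc
    exact_mod_cast (by linarith : (0 : ℝ) < ∑ i, (cycleShift σ ε W rmax x f _ i : ℝ))
  have hle : ((∑ i, (x i + cycleShift σ ε W rmax x f (B.length + 1) i).toNat : ℕ) : ℤ) ≤
      ∑ i, (x i : ℤ) := by
    exact_mod_cast hopt _ (isDiscreteAlloc_shift σ ε W rmax x hσε hx hf hcycle harc)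
  push_cast [toNat_add_cycleShift σ ε W rmax x hf] at hle
  rw [sum_add_distrib] at hle
  linarith

theorem exists_potential_of_isMaxDiscreteAlloc (hσε : ∀ i, σ i < ε i) (hM : ∀ i, ε i ≤ M)
    (hx : IsDiscreteAlloc σ ε W rmax x)
    (hopt : ∀ y, IsDiscreteAlloc σ ε W rmax y → ∑ i, y i ≤ ∑ i, x i) :
    ∃ π : ℕ → ℝ, (∀ i, x i < rmax i → π (ε i) + 1 ≤ π (σ i)) ∧
      (∀ i, 0 < x i → π (σ i) ≤ π (ε i) + 1) ∧
      ∀ q < M, π (q + 1) ≤ π q ∧ (load σ ε x q < W → π q ≤ π (q + 1)) := by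
  obtain ⟨π, hπ⟩ := exists_potential_of_hasNonnegSimpleCycles
    (hasNonnegSimpleCycles_residualWeight σ ε W rmax x M hσε hx hopt)
  have mem {q : ℕ} (hq : q ≤ M) : q ∈ range (M + 1) := mem_range.mpr (by omega)
  have hσM (i : Fin n) : σ i ≤ M := ((hσε i).trans_le (hM i)).le
  refine ⟨π, fun i hi => ?_, fun i hi => ?_, fun q hq => ⟨?_, fun hl => ?_⟩⟩
  · have := hπ _ (mem (hσM i)) _ (mem (hM i))
    rw [residualWeight_of_isIncreaseArc σ ε W rmax x M ⟨i, hi, rfl, rfl⟩] at this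
    linarith
  · have := hπ _ (mem (hM i)) _ (mem (hσM i))
    have := residualWeight_le_one σ ε W rmax x M (Or.inr (Or.inr ⟨i, hi, rfl, rfl⟩))
    linarith
  · have := hπ _ (mem hq.le) _ (mem hq)
    have := residualWeight_nonpos_of_isGroundArc σ ε W rmax x M
      (Or.inl rfl : IsGroundArc σ ε W x q (q + 1))
    linarith
  · have := hπ _ (mem hq) _ (mem hq.le)
    have := residualWeight_nonpos_of_isGroundArc σ ε W rmax x M
      (Or.inr ⟨rfl, hl⟩ : IsGroundArc σ ε W x (q + 1) q)
    linarith

end ResidualGraph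

section UniformCounting

variable {n : ℕ} {σ ε : Fin n → ℕ} {W K r Max : ℕ} {x : Fin n → ℕ}

theorem card_eq_of_load_eq (hW : W = K * Max + r) (hr : 0 < r) (hrMax : r < Max)
    (hvals : ∀ i, x i = 0 ∨ x i = r ∨ x i = Max) {q : ℕ}
    (hcard : #{i ∈ activeAt σ ε q | 0 < x i} ≤ K + 1) (hfull : load σ ε x q = W) :
    #{i ∈ activeAt σ ε q | x i = r} = 1 ∧ #{i ∈ activeAt σ ε q | x i = Max} = K := by
  have hsum := sum_comp_eq_of_forall_eq_zero_or (activeAt σ ε q) hrMax.ne hvals (g := id) rfl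
  have hpos := sum_comp_eq_of_forall_eq_zero_or (activeAt σ ε q) hrMax.ne hvals
    (g := fun v => if 0 < v then 1 else 0) (by simp)
  simp only [sum_boole, if_pos hr, if_pos (hr.trans hrMax), smul_eq_mul, mul_one,
    id] at hsum hpos
  unfold load at hfull
  exact eq_one_and_eq_of_mul_add_mul_eq hr hrMax (by rw [← hW, ← hfull, hsum]; ring)
    (hpos ▸ hcard)

theorem mul_card_le_card_of_potential (hσε : ∀ i, σ i < ε i) {M : ℕ} (hM : ∀ i, ε i ≤ M)
    (hW : W = K * Max + r) (hr : 0 < r) (hrMax : r < Max)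
    (hvals : ∀ i, x i = 0 ∨ x i = r ∨ x i = Max)
    (hcard : ∀ q, #{i ∈ activeAt σ ε q | 0 < x i} ≤ K + 1) (hx : ∀ q, load σ ε x q ≤ W)
    {π : ℕ → ℝ} (hinc : ∀ i, x i < Max → π (ε i) + 1 ≤ π (σ i))
    (hdec : ∀ i, 0 < x i → π (σ i) ≤ π (ε i) + 1)
    (hground : ∀ q < M, π (q + 1) ≤ π q ∧ (load σ ε x q < W → π q ≤ π (q + 1))) :
    K * #{i | x i = r} ≤ #{i | x i = Max} := by
  set d : ℕ → ℝ := fun q => π q - π (q + 1)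
  have hcount (v : ℕ) : ∑ i ∈ {i | x i = v}, (π (σ i) - π (ε i)) =
      ∑ q ∈ range M, (#{i ∈ activeAt σ ε q | x i = v} : ℝ) * d q := by
    have hspan (i : Fin n) : π (σ i) - π (ε i) = ∑ q ∈ Ico (σ i) (ε i), d q := by
      rw [← neg_sub, ← sum_Ico_sub π (hσε i).le, ← sum_neg_distrib]
      simp only [d, neg_sub]
    simp_rw [hspan, sum_sum_Ico_eq_sum_card_mul _ hM, filter_comm]
    rfl
  have hdrop (q : ℕ) (hq : q ∈ range M) : (K : ℝ) * #{i ∈ activeAt σ ε q | x i = r} * d q ≤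
      #{i ∈ activeAt σ ε q | x i = Max} * d q := by
    obtain ⟨hdown, hup⟩ := hground q (mem_range.mp hq)
    rcases (sub_nonneg.mpr hdown : 0 ≤ d q).eq_or_lt with hd | hd
    · rw [show d q = 0 from hd.symm, mul_zero, mul_zero]
    have hfull : load σ ε x q = W := (hx q).antisymm <| not_lt.mp fun hlt => by
      linarith [hup hlt, show 0 < π q - π (q + 1) from hd]
    obtain ⟨h₁, h₂⟩ := card_eq_of_load_eq hW hr hrMax hvals (hcard q) hfull
    rw [h₁, h₂, Nat.cast_one, mul_one]
  have hG₁ : ∀ i ∈ ({i | x i = r} : Finset _), π (σ i) - π (ε i) = 1 := fun i hi => by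
    have hi : x i = r := by simpa using hi
    linarith [hinc i (by omega), hdec i (by omega)]
  have hG₂ : ∀ i ∈ ({i | x i = Max} : Finset _), π (σ i) - π (ε i) ≤ 1 := fun i hi => by
    have hi : x i = Max := by simpa using hi
    linarith [hdec i (by omega)]
  have : (K : ℝ) * #{i | x i = r} ≤ #{i | x i = Max} := calc
    (K : ℝ) * #{i | x i = r} = K * ∑ i ∈ {i | x i = r}, (π (σ i) - π (ε i)) := by
      rw [sum_congr rfl hG₁]; simp
    _ = ∑ q ∈ range M, K * #{i ∈ activeAt σ ε q | x i = r} * d q := by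
      rw [hcount, mul_sum]; simp only [mul_assoc]
    _ ≤ ∑ q ∈ range M, (#{i ∈ activeAt σ ε q | x i = Max} : ℝ) * d q := sum_le_sum hdrop
    _ = ∑ i ∈ {i | x i = Max}, (π (σ i) - π (ε i)) := (hcount Max).symm
    _ ≤ #{i | x i = Max} := by simpa using sum_le_sum hG₂
  exact_mod_cast this

end UniformCounting

section Discretization

variable {n : ℕ} (s e : Fin n → ℝ)

noncomputable def endpoints : Finset ℝ := univ.image s ∪ univ.image e

/-! Job `i` becomes the integer interval `[startRank s e i, endRank s e i)`; a real point `t`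
meets the same jobs as the integer `rankIn (endpoints s e) t`. -/

noncomputable def startRank (i : Fin n) : ℕ := rankIn (endpoints s e) (s i)

noncomputable def endRank (i : Fin n) : ℕ := rankIn (endpoints s e) (e i)

variable {s e}

theorem startRank_le_iff (i : Fin n) (t : ℝ) :
    startRank s e i ≤ rankIn (endpoints s e) t ↔ s i ≤ t :=
  rankIn_le_rankIn_iff (by simp [endpoints]) t

theorem endRank_le_iff (i : Fin n) (t : ℝ) :
    endRank s e i ≤ rankIn (endpoints s e) t ↔ e i ≤ t :=
  rankIn_le_rankIn_iff (by simp [endpoints]) t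

theorem startRank_lt_endRank (hse : ∀ i, s i < e i) (i : Fin n) :
    startRank s e i < endRank s e i :=
  not_le.mp fun h => (hse i).not_ge ((endRank_le_iff i (s i)).mp h)

theorem endRank_le_card (i : Fin n) : endRank s e i ≤ #(endpoints s e) := by
  unfold endRank rankIn
  exact card_filter_le _ _

theorem forall_le_iff_forall_activeAt_le {B : ℕ} (F : Finset (Fin n) → ℕ) (hF : F ∅ ≤ B) :
    (∀ t : ℝ, F {i | s i ≤ t ∧ t < e i} ≤ B) ↔
      ∀ q, F (activeAt (startRank s e) (endRank s e) q) ≤ B := by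
  refine ⟨fun h q => ?_, fun h t => ?_⟩
  · rcases rankIn_le_iff_or (P := endpoints s e) q with ⟨t, ht⟩ | hq
    · convert h t using 2
      ext i
      simp only [activeAt, mem_filter, mem_univ, true_and, ← not_le]
      rw [startRank, endRank, ht _ (by simp [endpoints]), ht _ (by simp [endpoints])]
    · convert hF
      ext i
      simp only [activeAt, mem_filter, mem_univ, true_and, notMem_empty, iff_false, not_and]
      exact fun h' => absurd h' (not_le.mpr (hq (s i) (by simp [endpoints])))
  · convert h (rankIn (endpoints s e) t) using 2
    ext i
    simp only [activeAt, mem_filter, mem_univ, true_and, startRank_le_iff, ← not_le,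
      endRank_le_iff]

end Discretization

end FBAP

open FBAP

theorem stmt_14_general {n : ℕ} (s e : Fin n → ℝ) (hse : ∀ i, s i < e i)
    (W : ℕ) (rmax : Fin n → ℕ)
    (p : Fin n → ℝ)
    (Max : ℕ) (hMax1 : 1 ≤ Max)
    (hup : ∀ i, p i = 1) (hur : ∀ i, rmax i = Max)
    (r : ℕ) (hr : r = W % Max) (hrpos : 0 < r)
    (k : ℕ) (hk : k = ⌈(W : ℝ) / (Max : ℝ)⌉₊)
    (x : Fin n → ℕ) (hx : IsAlloc W s e rmax x)
    (hxmax : ∀ y : Fin n → ℕ, IsAlloc W s e rmax y →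
      allocProfit p y ≤ allocProfit p x)
    (hvals : ∀ i, x i = 0 ∨ x i = r ∨ x i = Max)
    (hload : ∀ t : ℝ,
      (Finset.univ.filter (fun i => 0 < x i ∧ s i ≤ t ∧ t < e i)).card ≤ k) :
    (r : ℝ) * (Finset.univ.filter (fun i => x i = r)).card ≤
      ((r : ℝ) / Max) / ((k : ℝ) - 1 + (r : ℝ) / Max) * (∑ i, (x i : ℝ)) := by
  have hrMax : r < Max := hr ▸ Nat.mod_lt W hMax1
  have hW : W = W / Max * Max + r := by rw [hr, Nat.div_add_mod']
  rw [ceil_natCast_div_eq_div_add_one hMax1 (hr ▸ hrpos)] at hk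
  have hxD : IsDiscreteAlloc (startRank s e) (endRank s e) W rmax x :=
    ⟨hx.1, (forall_le_iff_forall_activeAt_le (fun A => ∑ i ∈ A, x i) (by simp)).mp hx.2⟩
  have hopt (y : Fin n → ℕ) (hy : IsDiscreteAlloc (startRank s e) (endRank s e) W rmax y) :
      ∑ i, y i ≤ ∑ i, x i := by
    have := hxmax y
      ⟨hy.1, (forall_le_iff_forall_activeAt_le (fun A => ∑ i ∈ A, y i) (by simp)).mpr hy.2⟩
    simp only [allocProfit, hup, one_mul] at this
    exact_mod_cast this
  have hcard (q : ℕ) : #{i ∈ activeAt (startRank s e) (endRank s e) q | 0 < x i} ≤ k := by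
    refine (forall_le_iff_forall_activeAt_le (fun A => #{i ∈ A | 0 < x i}) (by simp)).mp
      (fun t => ?_) q
    simpa only [filter_filter, and_comm] using hload t
  obtain ⟨π, hinc, hdec, hground⟩ := exists_potential_of_isMaxDiscreteAlloc _ _ W rmax x _
    (startRank_lt_endRank hse) endRank_le_card hxD hopt
  have hcount := mul_card_le_card_of_potential (startRank_lt_endRank hse) endRank_le_card hW
    hrpos hrMax hvals (hk ▸ hcard) hxD.2 (fun i hi => hinc i (hur i ▸ hi)) hdec hground
  rw [hk, Nat.cast_add, Nat.cast_one, add_sub_cancel_right,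
    sum_comp_eq_of_forall_eq_zero_or univ hrMax.ne hvals Nat.cast_zero]
  simp only [nsmul_eq_mul]
  exact mul_le_div_div_mul (by positivity) (by positivity) (by positivity)
    (by exact_mod_cast hcount)

theorem stmt_14 {n : ℕ} (s e : Fin n → ℝ) (hse : ∀ i, s i < e i)
    (W : ℕ) (hW : 1 ≤ W) (rmax : Fin n → ℕ) (hrmax : ∀ i, rmax i ≤ W)
    (p : Fin n → ℝ) (hp : ∀ i, 1 ≤ p i)
    (Max : ℕ) (hMax1 : 1 ≤ Max) (hMaxW : Max ≤ W)
    (hup : ∀ i, p i = 1) (hur : ∀ i, rmax i = Max)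
    (r : ℕ) (hr : r = W % Max) (hrpos : 0 < r)
    (k : ℕ) (hk : k = ⌈(W : ℝ) / (Max : ℝ)⌉₊)
    (x : Fin n → ℕ) (hx : IsAlloc W s e rmax x)
    (hxmax : ∀ y : Fin n → ℕ, IsAlloc W s e rmax y →
      allocProfit p y ≤ allocProfit p x)
    (hvals : ∀ i, x i = 0 ∨ x i = r ∨ x i = Max)
    (hload : ∀ t : ℝ,
      (Finset.univ.filter (fun i => 0 < x i ∧ s i ≤ t ∧ t < e i)).card ≤ k) :
    (r : ℝ) * (Finset.univ.filter (fun i => x i = r)).card ≤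
      ((r : ℝ) / Max) / ((k : ℝ) - 1 + (r : ℝ) / Max) * (∑ i, (x i : ℝ)) :=
  stmt_14_general s e hse W rmax p Max hMax1 hup hur r hr hrpos k hk x hx hxmax hvals hload
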